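/- For every integer α ≥ 1, the quantity 1 − α/(1+α) · Π_{i=1}^{α−1} (i+i²)/(1+i+i²) converges as α → ∞ to 1 − π/cosh(√3·π/2). -/

import Mathlib

/-!
Factor `1 + i + i² = (i + ζ)(i + 1 - ζ)` with `ζ = (1 + √3 i)/2`, a root of `z² = z - 1`. Then
`(n / (n + 1)) ∏_{i=1}^n (i + i²)/(1 + i + i²)` is exactly Euler's product
`GammaSeq ζ n * GammaSeq (1 - ζ) n`, which tends to `Γ(ζ)Γ(1 - ζ) = π / sin(πζ)`, and
`sin(πζ) = sin(π/2 + i√3π/2) = cosh(√3π/2)`.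
-/

open Filter Real Topology
open scoped Nat

lemma add_mul_one_sub_add_of_sq_eq_sub_one {R : Type*} [CommRing R] {w : R}
    (hw : w ^ 2 = w - 1) (z : R) : (w + z) * (1 - w + z) = 1 + z + z ^ 2 := by
  linear_combination -hw

lemma prod_Icc_natCast_add_sq (n : ℕ) :
    ∏ i ∈ Finset.Icc 1 n, ((i : ℝ) + (i : ℝ) ^ 2) = n ! * (n + 1)! := by
  induction n with
  | zero => simp
  | succ m ih =>
    rw [Finset.prod_Icc_succ_top (by omega), ih, Nat.factorial_succ (m + 1), Nat.factorial_succ m]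
    push_cast
    ring

lemma prod_range_succ_one_add_natCast_add_sq (n : ℕ) :
    ∏ j ∈ Finset.range (n + 1), (1 + (j : ℝ) + (j : ℝ) ^ 2) =
      ∏ i ∈ Finset.Icc 1 n, (1 + (i : ℝ) + (i : ℝ) ^ 2) := by
  rw [Finset.prod_range_eq_mul_Ico _ (by omega : 0 < n + 1), Finset.Ico_add_one_right_eq_Icc]
  simp

lemma natCast_div_add_one_mul_prod_Icc_eq (n : ℕ) :
    (n : ℝ) / (n + 1) * ∏ i ∈ Finset.Icc 1 n, ((i : ℝ) + i ^ 2) / (1 + i + i ^ 2) =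
      n * (n ! : ℝ) ^ 2 / ∏ j ∈ Finset.range (n + 1), (1 + (j : ℝ) + j ^ 2) := by
  have hD : ∏ i ∈ Finset.Icc 1 n, (1 + (i : ℝ) + i ^ 2) ≠ 0 :=
    Finset.prod_ne_zero_iff.mpr fun i _ => by positivity
  rw [prod_range_succ_one_add_natCast_add_sq, Finset.prod_div_distrib, prod_Icc_natCast_add_sq,
    Nat.factorial_succ]
  push_cast
  field_simp

namespace Complex

lemma GammaSeq_mul_GammaSeq_one_sub (s : ℂ) {n : ℕ} (hn : n ≠ 0) :
    GammaSeq s n * GammaSeq (1 - s) n =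
      n * (n ! : ℂ) ^ 2 / ∏ j ∈ Finset.range (n + 1), (s + j) * (1 - s + j) := by
  have hn' : (n : ℂ) ≠ 0 := Nat.cast_ne_zero.mpr hn
  rw [GammaSeq, GammaSeq, div_mul_div_comm, ← Finset.prod_mul_distrib, mul_mul_mul_comm,
    ← cpow_add _ _ hn', add_sub_cancel, cpow_one]
  ring

noncomputable def primSixthRoot : ℂ := (1 + √3 * I) / 2

lemma primSixthRoot_sq : primSixthRoot ^ 2 = primSixthRoot - 1 := by
  have h3 : ((√3 : ℝ) : ℂ) ^ 2 = 3 := by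
    rw [← ofReal_pow, Real.sq_sqrt (by norm_num)]
    norm_num
  rw [primSixthRoot]
  linear_combination (I ^ 2 / 4) * h3 + (3 / 4 : ℂ) * I_sq

lemma sin_pi_mul_primSixthRoot : sin (π * primSixthRoot) = Real.cosh (√3 * π / 2) := by
  have h : (π * primSixthRoot : ℂ) = ↑(π / 2) + ↑(√3 * π / 2) * I := by
    rw [primSixthRoot]
    push_cast
    ring
  rw [h, sin_add_mul_I, ← ofReal_sin, ← ofReal_cos, Real.sin_pi_div_two, Real.cos_pi_div_two,
    ← ofReal_cosh]
  push_cast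
  ring

lemma Gamma_primSixthRoot_mul_Gamma_one_sub :
    Gamma primSixthRoot * Gamma (1 - primSixthRoot) = ↑(π / Real.cosh (√3 * π / 2)) := by
  rw [Gamma_mul_Gamma_one_sub, sin_pi_mul_primSixthRoot, ofReal_div]

lemma GammaSeq_primSixthRoot_mul_GammaSeq_one_sub {n : ℕ} (hn : n ≠ 0) :
    GammaSeq primSixthRoot n * GammaSeq (1 - primSixthRoot) n =
      ↑((n : ℝ) / (n + 1) * ∏ i ∈ Finset.Icc 1 n, ((i : ℝ) + i ^ 2) / (1 + i + i ^ 2)) := by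
  rw [GammaSeq_mul_GammaSeq_one_sub _ hn, natCast_div_add_one_mul_prod_Icc_eq]
  simp only [add_mul_one_sub_add_of_sq_eq_sub_one primSixthRoot_sq]
  push_cast
  rfl

end Complex

lemma tendsto_prod_Icc_natCast_add_sq_div :
    Tendsto (fun n : ℕ => ∏ i ∈ Finset.Icc 1 n, ((i : ℝ) + i ^ 2) / (1 + i + i ^ 2)) atTop
      (𝓝 (π / Real.cosh (√3 * π / 2))) := by
  have hGamma := (Complex.GammaSeq_tendsto_Gamma Complex.primSixthRoot).mul
    (Complex.GammaSeq_tendsto_Gamma (1 - Complex.primSixthRoot))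
  rw [Complex.Gamma_primSixthRoot_mul_Gamma_one_sub] at hGamma
  have hweighted := tendsto_ofReal_iff.mp <| hGamma.congr' <|
    (eventually_ne_atTop 0).mono fun n hn =>
      Complex.GammaSeq_primSixthRoot_mul_GammaSeq_one_sub hn
  have hquot := hweighted.div (tendsto_natCast_div_add_atTop (1 : ℝ)) one_ne_zero
  rw [div_one] at hquot
  refine hquot.congr' <| (eventually_ne_atTop 0).mono fun n hn => ?_
  exact mul_div_cancel_left₀ _ (div_ne_zero (Nat.cast_ne_zero.mpr hn) (by positivity))

theorem stmt_13 :
    Tendsto (fun α : ℕ =>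
        1 - (α : ℝ) / (1 + (α : ℝ)) *
          ∏ i ∈ Finset.Icc 1 (α - 1), ((i : ℝ) + (i : ℝ) ^ 2) / (1 + (i : ℝ) + (i : ℝ) ^ 2))
      atTop (nhds (1 - π / Real.cosh (Real.sqrt 3 * π / 2))) := by
  have hweight : Tendsto (fun α : ℕ => (α : ℝ) / (1 + α)) atTop (𝓝 1) := by
    simpa only [add_comm] using tendsto_natCast_div_add_atTop (1 : ℝ)
  have hprod := tendsto_prod_Icc_natCast_add_sq_div.comp (tendsto_sub_atTop_nat 1)
  simpa only [one_mul, Function.comp_def] using (hweight.mul hprod).const_sub 1
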